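/- Let A, B ∈ ℤ with 0 < A ≤ B, B ≥ 2, 2A − B = 3 and A ≠ B, let M = [[0, −B], [1, −A]] acting on ℝ², and let T be the tile for M and digits {0, …, B−1}·e₁. For digits a₁, a₁' ∈ {0, …, B−1} with a₁ ≠ a₁', the subdivision pieces T_{a₁} = M⁻¹·(T + a₁·e₁) and T_{a₁'} = M⁻¹·(T + a₁'·e₁) have nonempty intersection if and only if a₁ − a₁' = 1 or a₁ − a₁' = −1. -/

import Mathlib

/-!
Write `N = M⁻¹` and `f_d v = N (v + d e₁)`. The tile equation says that each digit map `f_d` sends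
`T` into itself, and the pieces `T_a`, `T_a'` meet iff `(a' - a) e₁ ∈ T - T`.

Touching at distance one: since `B = 2A - 3`, the polynomial `x³ + (A-1)x² + (A-3)x - B` equals
`(x - 1)(x² + Ax + B)`, so `B N³ = 1 + (A-1) N + (A-3) N²`. Hence the affine maps
`F = f_{A-1} ∘ f_{A-3} ∘ f_0` and `G = f_0 ∘ f_0 ∘ f_{B-1}`, both with linear part `N³`, satisfy
`G (v + e₁) = F v + e₁`. As `N` is contracting, `Gⁿ t - Fⁿ t → e₁`, and `T - T` is compact.

No touching at distance `|k| ≥ 2`: if `w = p e₁ + q e₂ ∈ T - T`, then `M w - e e₁ ∈ T - T` for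
some `|e| ≤ B - 1`. Starting from `w = k e₁` this gives a bounded integer sequence with `q₀ = 0`,
`q₁ = k` and `q_{n+2} + A q_{n+1} + B q_n = -e_n`. At a term of maximal modulus `Q` the recurrence
forces `Q ≤ 2`, whereas `|k| ≥ 2` forces `|q₂| ≥ 4`.
-/

noncomputable section

/-- The matrix `[[0, -B], [1, -A]]` as a real matrix. -/
def M' (A B : ℤ) : Matrix (Fin 2) (Fin 2) ℝ := !![0, -(B : ℝ); 1, -(A : ℝ)]

/-- `e₁ = (1, 0) ∈ ℝ²`. -/
def e1 : Fin 2 → ℝ := ![1, 0]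

/-- The subdivision piece `T_{a₁…a_m} = M⁻¹(a₁e₁) + ⋯ + M^{-m}(a_m e₁) + M^{-m}·T`. -/
def subPiece (A B : ℤ) (T : Set (Fin 2 → ℝ)) {m : ℕ} (a : Fin m → ℤ) :
    Set (Fin 2 → ℝ) :=
  (fun x => (∑ i : Fin m, ((M' A B)⁻¹ ^ ((i : ℕ) + 1)).mulVec ((a i : ℝ) • e1))
    + ((M' A B)⁻¹ ^ m).mulVec x) '' T

open Filter Topology Matrix Set
open scoped Pointwise

section Decay

variable {E : Type*} [SeminormedAddCommGroup E] [NormedSpace ℝ E]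

theorem tendsto_zero_of_two_step_recurrence {a b : ℝ} (ha : 0 ≤ a) (hb : 0 ≤ b)
    (hab : a + b ≤ 1) (hba : b ≤ a ^ 2) (hθ : a ^ 2 + a * b - b < 1) {u : ℕ → E}
    (hu : ∀ n, u (n + 2) + a • u (n + 1) + b • u n = 0) :
    Tendsto u atTop (𝓝 0) := by
  set θ := a ^ 2 + a * b - b
  set m : ℕ → ℝ := fun n => max ‖u n‖ ‖u (n + 1)‖
  have hm0 : ∀ n, 0 ≤ m n := fun n => (norm_nonneg _).trans (le_max_left _ _)
  have norm_le : ∀ n (c d : ℝ), 0 ≤ c → 0 ≤ d →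
      ‖c • u (n + 1) + d • u n‖ ≤ (c + d) * m n := fun n c d hc hd =>
    calc ‖c • u (n + 1) + d • u n‖ ≤ c * ‖u (n + 1)‖ + d * ‖u n‖ := by
          refine (norm_add_le _ _).trans ?_
          rw [norm_smul, norm_smul, Real.norm_of_nonneg hc, Real.norm_of_nonneg hd]
      _ ≤ (c + d) * m n := by
          rw [add_mul]; gcongr; exacts [le_max_right _ _, le_max_left _ _]
  have hu2 : ∀ n, ‖u (n + 2)‖ ≤ m n := fun n => by
    rw [← norm_neg, neg_eq_of_add_eq_zero_right ((add_assoc _ _ _).symm.trans (hu n))]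
    exact (norm_le n a b ha hb).trans (by nlinarith [hm0 n])
  -- two steps give `u (n + 3) = (a² - b) • u (n + 1) + a b • u n`, with coefficients summing to `θ`
  have hu3 : ∀ n, ‖u (n + 3)‖ ≤ θ * m n := fun n => by
    have h : u (n + 3) = (a ^ 2 - b) • u (n + 1) + (a * b) • u n := by
      have h1 := hu (n + 1)
      rw [show n + 1 + 2 = n + 3 by ring] at h1
      rw [← sub_eq_zero]
      linear_combination (norm := module) h1 - a • hu n
    rw [h, show θ = (a ^ 2 - b) + a * b by ring]
    exact norm_le n _ _ (by linarith) (mul_nonneg ha hb)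
  have hanti : Antitone m := antitone_nat_of_succ_le fun n => max_le (le_max_right _ _) (hu2 n)
  have hm3 : ∀ n, m (n + 3) ≤ θ * m n := fun n =>
    max_le (hu3 n) ((hu3 (n + 1)).trans
      (mul_le_mul_of_nonneg_left (hanti (Nat.le_succ n)) (by nlinarith)))
  have hlim := tendsto_atTop_ciInf hanti ⟨0, by rintro _ ⟨n, rfl⟩; exact hm0 n⟩
  have hL : ⨅ n, m n ≤ θ * ⨅ n, m n :=
    le_of_tendsto_of_tendsto' ((tendsto_add_atTop_iff_nat 3).2 hlim) (hlim.const_mul _) hm3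
  have hL0 : ⨅ n, m n = 0 := le_antisymm (by nlinarith [le_ciInf hm0]) (le_ciInf hm0)
  rw [hL0] at hlim
  exact squeeze_zero_norm (fun n => le_max_left _ _) hlim

end Decay

theorem IsCompact.sub {E : Type*} [TopologicalSpace E] [AddGroup E] [IsTopologicalAddGroup E]
    {s t : Set E} (hs : IsCompact s) (ht : IsCompact t) : IsCompact (s - t) := by
  rw [sub_eq_add_neg]
  exact hs.add ht.neg

theorem mem_sub_self_of_mapsTo_affine {ι : Type*} [Fintype ι] [DecidableEq ι] {T : Set (ι → ℝ)}
    (hTcp : IsCompact T) (hTne : T.Nonempty) (L : Matrix ι ι ℝ) (c w : ι → ℝ)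
    (hL : Tendsto (fun n => (L ^ n) *ᵥ w) atTop (𝓝 0))
    (hF : MapsTo (fun v => L *ᵥ v + c) T T)
    (hG : MapsTo (fun v => L *ᵥ v + (c + w - L *ᵥ w)) T T) : w ∈ T - T := by
  obtain ⟨t, ht⟩ := hTne
  set F := fun v => L *ᵥ v + c
  set G := fun v => L *ᵥ v + (c + w - L *ᵥ w)
  have hdiff : ∀ n, G^[n] t - F^[n] t = w - (L ^ n) *ᵥ w := by
    intro n
    induction n with
    | zero => simp
    | succ n ih =>
      rw [Function.iterate_succ_apply', Function.iterate_succ_apply', pow_succ',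
        ← mulVec_mulVec, ← sub_sub_cancel w (L ^ n *ᵥ w), ← ih]
      simp only [G, F, mulVec_sub]
      abel
  have hlim : Tendsto (fun n => G^[n] t - F^[n] t) atTop (𝓝 w) := by
    simp_rw [hdiff]
    simpa using tendsto_const_nhds.sub hL
  exact (hTcp.sub hTcp).isClosed.mem_of_tendsto hlim
    (Eventually.of_forall fun n => sub_mem_sub (hG.iterate n ht) (hF.iterate n ht))

section Recurrence

variable {A B : ℤ}

theorem le_two_of_recurrence_at_max (hA : 4 ≤ A) (h3 : 2 * A - B = 3)
    {Q q₁ q₂ q₃ e₀ e₁ : ℤ} (h₁ : |q₁| ≤ Q) (h₂ : |q₂| ≤ Q) (h₃ : |q₃| ≤ Q)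
    (he₀ : |e₀| ≤ B - 1) (he₁ : |e₁| ≤ B - 1)
    (r₀ : q₂ + A * q₁ + B * Q = -e₀) (r₁ : q₃ + A * q₂ + B * q₁ = -e₁) : Q ≤ 2 := by
  rw [abs_le] at h₁ h₂ h₃ he₀ he₁
  by_contra! hQ
  have hq₁ : q₁ ≤ -Q + 1 := by nlinarith
  obtain rfl | rfl : q₁ = -Q ∨ q₁ = -Q + 1 := by omega
  · nlinarith
  · nlinarith

theorem abs_le_one_of_bounded_recurrence (hA : 4 ≤ A) (h3 : 2 * A - B = 3) {q e : ℕ → ℤ}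
    (hbdd : BddAbove (range fun n => |q n|)) (he : ∀ n, |e n| ≤ B - 1)
    (hrec : ∀ n, q (n + 2) + A * q (n + 1) + B * q n = -e n) (h0 : q 0 = 0) :
    |q 1| ≤ 1 := by
  by_contra! h1
  obtain ⟨n, hn⟩ := Int.csSup_mem (range_nonempty fun n => |q n|) hbdd
  set Q := sSup (range fun n => |q n|)
  have hQ : ∀ k, |q k| ≤ Q := fun k => le_csSup hbdd (mem_range_self k)
  -- as `q 0 = 0`, the first step gives `|q 2| ≥ A (|q 1| - 2) + 4 ≥ 4`
  have hQ3 : 3 ≤ Q := by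
    have r := hrec 0
    have h2 := abs_le.1 (hQ 2)
    have he0 := abs_le.1 (he 0)
    rw [h0] at r
    rcases lt_abs.1 h1 with h | h <;> nlinarith
  have hle : ∀ k, |-q k| ≤ Q := fun k => (abs_neg (q k)).symm ▸ hQ k
  have hle' : ∀ k, |-e k| ≤ B - 1 := fun k => (abs_neg (e k)).symm ▸ he k
  rcases abs_eq ((abs_nonneg _).trans (hQ 0)) |>.1 hn with hn | hn
  · have := le_two_of_recurrence_at_max hA h3 (hQ (n + 1)) (hQ (n + 2)) (hQ (n + 3))
      (he n) (he (n + 1)) (hn ▸ hrec n) (hrec (n + 1))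
    omega
  · have := le_two_of_recurrence_at_max hA h3 (hle (n + 1)) (hle (n + 2)) (hle (n + 3))
      (hle' n) (hle' (n + 1)) (by linear_combination -hrec n + B * hn)
      (by linear_combination -hrec (n + 1))
    omega

end Recurrence

section Matrix

variable {A B : ℤ}

theorem det_M' : (M' A B).det = B := by simp [M', det_fin_two_of]

theorem M'_mulVec_inv_mulVec (hB : B ≠ 0) (v : Fin 2 → ℝ) :
    M' A B *ᵥ ((M' A B)⁻¹ *ᵥ v) = v := by
  rw [mulVec_mulVec, mul_nonsing_inv _ (by simp [det_M', hB]), one_mulVec]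

theorem inv_mulVec_M'_mulVec (hB : B ≠ 0) (v : Fin 2 → ℝ) :
    (M' A B)⁻¹ *ᵥ (M' A B *ᵥ v) = v := by
  rw [mulVec_mulVec, nonsing_inv_mul _ (by simp [det_M', hB]), one_mulVec]

theorem M'_mulVec (v : Fin 2 → ℝ) : M' A B *ᵥ v = ![-(B : ℝ) * v 1, v 0 - A * v 1] := by
  ext i
  fin_cases i <;> simp [M', vecHead, vecTail, ← sub_eq_add_neg]

theorem M'_mulVec_cayleyHamilton (v : Fin 2 → ℝ) :
    M' A B *ᵥ (M' A B *ᵥ v) + (A : ℝ) • (M' A B *ᵥ v) + (B : ℝ) • v = 0 := by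
  simp only [M'_mulVec]
  ext i
  fin_cases i
  · simp; ring
  · simp

theorem M'_mulVec_lattice_sub (p q e : ℤ) :
    M' A B *ᵥ ![(p : ℝ), (q : ℝ)] - (e : ℝ) • e1 =
      ![((-B * q - e : ℤ) : ℝ), ((p - A * q : ℤ) : ℝ)] := by
  rw [M'_mulVec]
  ext i
  fin_cases i <;> simp [e1]

theorem inv_M'_pow_mulVec_recurrence (hB : B ≠ 0) (v : Fin 2 → ℝ) (n : ℕ) :
    (B : ℝ) • ((M' A B)⁻¹ ^ (n + 2) *ᵥ v) + (A : ℝ) • ((M' A B)⁻¹ ^ (n + 1) *ᵥ v) +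
      (M' A B)⁻¹ ^ n *ᵥ v = 0 := by
  have hsucc : ∀ k, (M' A B)⁻¹ ^ k *ᵥ v = M' A B *ᵥ ((M' A B)⁻¹ ^ (k + 1) *ᵥ v) := fun k => by
    rw [pow_succ', ← mulVec_mulVec, M'_mulVec_inv_mulVec hB]
  rw [hsucc n, hsucc (n + 1), ← M'_mulVec_cayleyHamilton ((M' A B)⁻¹ ^ (n + 2) *ᵥ v)]
  abel

theorem tendsto_inv_M'_pow_mulVec (hA : 4 ≤ A) (h3 : 2 * A - B = 3) (v : Fin 2 → ℝ) :
    Tendsto (fun n => (M' A B)⁻¹ ^ n *ᵥ v) atTop (𝓝 0) := by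
  have hB : (5 : ℝ) ≤ B := by exact_mod_cast (by omega : (5 : ℤ) ≤ B)
  have hAB : (B : ℝ) = 2 * A - 3 := by rw [show B = 2 * A - 3 by omega]; push_cast; ring
  have hB0 : (B : ℝ) ≠ 0 := by positivity
  refine tendsto_zero_of_two_step_recurrence (a := A / B) (b := 1 / B) (by positivity)
    (by positivity) ?_ ?_ ?_ fun n => ?_
  · rw [← add_div, div_le_one (by positivity)]; linarith
  · rw [div_pow, div_le_div_iff₀ (by positivity) (by positivity)]; nlinarith
  · rw [show (A / B : ℝ) ^ 2 + A / B * (1 / B) - 1 / B = (A ^ 2 + A - B) / B ^ 2 by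
      field_simp, div_lt_one (by positivity)]
    nlinarith
  · have := congrArg ((B : ℝ)⁻¹ • ·)
      (inv_M'_pow_mulVec_recurrence (A := A) (B := B) (by omega) v n)
    simp only [smul_add, smul_smul, inv_mul_cancel₀ hB0, one_smul, smul_zero] at this
    rwa [div_eq_inv_mul, one_div]

end Matrix

def TileEquation (A B : ℤ) (T : Set (Fin 2 → ℝ)) : Prop :=
  (M' A B).mulVec '' T = ⋃ j ∈ Set.Icc (0 : ℤ) (B - 1), (fun x => x + (j : ℝ) • e1) '' T

section Tile

variable {A B : ℤ} {T : Set (Fin 2 → ℝ)}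

theorem inv_M'_pow_three_mulVec (h3 : 2 * A - B = 3) (v : Fin 2 → ℝ) :
    (B : ℝ) • ((M' A B)⁻¹ ^ 3 *ᵥ v) =
      v + ((A : ℝ) - 1) • ((M' A B)⁻¹ *ᵥ v) + ((A : ℝ) - 3) • ((M' A B)⁻¹ ^ 2 *ᵥ v) := by
  have r₀ := inv_M'_pow_mulVec_recurrence (A := A) (B := B) (by omega) v 0
  have r₁ := inv_M'_pow_mulVec_recurrence (A := A) (B := B) (by omega) v 1
  simp only [pow_zero, one_mulVec, zero_add, pow_one] at r₀ r₁
  have hAB : (B : ℝ) = 2 * A - 3 := by rw [show B = 2 * A - 3 by omega]; push_cast; ring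
  rw [hAB] at r₀ r₁ ⊢
  linear_combination (norm := module) r₁ - r₀

theorem mapsTo_inv_M'_add_digit (hB : B ≠ 0) (hT : TileEquation A B T) {d : ℤ}
    (hd : d ∈ Icc 0 (B - 1)) : MapsTo (fun v => (M' A B)⁻¹ *ᵥ (v + (d : ℝ) • e1)) T T := by
  intro x hx
  obtain ⟨t, ht, hteq⟩ : x + (d : ℝ) • e1 ∈ (M' A B).mulVec '' T :=
    hT ▸ mem_biUnion hd ⟨x, hx, rfl⟩
  simpa only [← hteq, inv_mulVec_M'_mulVec hB] using ht

theorem exists_digit_sub_mem (hT : TileEquation A B T) {x : Fin 2 → ℝ} (hx : x ∈ T) :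
    ∃ d ∈ Icc 0 (B - 1), M' A B *ᵥ x - (d : ℝ) • e1 ∈ T := by
  have : M' A B *ᵥ x ∈ ⋃ j ∈ Icc (0 : ℤ) (B - 1), (fun x => x + (j : ℝ) • e1) '' T :=
    hT ▸ mem_image_of_mem _ hx
  simp only [mem_iUnion, mem_image] at this
  obtain ⟨d, hd, t, ht, hteq⟩ := this
  exact ⟨d, hd, by rwa [← hteq, add_sub_cancel_right]⟩

theorem e1_mem_sub_self (hA : 4 ≤ A) (h3 : 2 * A - B = 3) (hTne : T.Nonempty)
    (hTcp : IsCompact T) (hT : TileEquation A B T) : e1 ∈ T - T := by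
  have hB : B ≠ 0 := by omega
  set N := (M' A B)⁻¹
  have hf : ∀ d ∈ Icc 0 (B - 1), MapsTo (fun v => N *ᵥ (v + (d : ℝ) • e1)) T T :=
    fun d hd => mapsTo_inv_M'_add_digit hB hT hd
  have hcomp : ∀ d₁ d₂ d₃ : ℤ, ∀ v, N *ᵥ (N *ᵥ (N *ᵥ (v + (d₁ : ℝ) • e1) + (d₂ : ℝ) • e1) +
      (d₃ : ℝ) • e1) = N ^ 3 *ᵥ v + ((d₁ : ℝ) • (N ^ 3 *ᵥ e1) + (d₂ : ℝ) • (N ^ 2 *ᵥ e1) +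
        (d₃ : ℝ) • (N *ᵥ e1)) := fun d₁ d₂ d₃ v => by
    simp only [mulVec_add, mulVec_smul, mulVec_mulVec, pow_succ, pow_zero, one_mul, mul_assoc]
    module
  refine mem_sub_self_of_mapsTo_affine hTcp hTne (N ^ 3)
    (((A : ℝ) - 3) • (N ^ 2 *ᵥ e1) + ((A : ℝ) - 1) • (N *ᵥ e1))
    e1 ?_ ?_ ?_
  · simp_rw [← pow_mul]
    exact (tendsto_inv_M'_pow_mulVec hA h3 e1).comp
      (tendsto_atTop_mono (fun n => Nat.le_mul_of_pos_left n three_pos) tendsto_id)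
  · refine ((hf (A - 1) ⟨by omega, by omega⟩).comp
      ((hf (A - 3) ⟨by omega, by omega⟩).comp (hf 0 ⟨le_rfl, by omega⟩))).congr fun v _ => ?_
    simp only [Function.comp, hcomp]
    push_cast
    module
  · refine ((hf 0 ⟨le_rfl, by omega⟩).comp
      ((hf 0 ⟨le_rfl, by omega⟩).comp (hf (B - 1) ⟨by omega, le_rfl⟩))).congr fun v _ => ?_
    simp only [Function.comp, hcomp]
    have := inv_M'_pow_three_mulVec h3 e1
    push_cast
    linear_combination (norm := module) this

theorem exists_M'_mulVec_sub_mem_sub_self (hT : TileEquation A B T) {w : Fin 2 → ℝ}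
    (hw : w ∈ T - T) : ∃ e : ℤ, |e| ≤ B - 1 ∧ M' A B *ᵥ w - (e : ℝ) • e1 ∈ T - T := by
  obtain ⟨y, hy, x, hx, rfl⟩ := hw
  obtain ⟨d, ⟨hd₀, hd₁⟩, hyd⟩ := exists_digit_sub_mem hT hy
  obtain ⟨d', ⟨hd₀', hd₁'⟩, hxd⟩ := exists_digit_sub_mem hT hx
  refine ⟨d - d', abs_le.2 ⟨by omega, by omega⟩, ?_⟩
  convert sub_mem_sub hyd hxd using 1
  push_cast
  rw [mulVec_sub]
  module

theorem abs_le_one_of_smul_e1_mem_sub_self (hA : 4 ≤ A) (h3 : 2 * A - B = 3)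
    (hTcp : IsCompact T) (hT : TileEquation A B T) {k : ℤ} (hk : (k : ℝ) • e1 ∈ T - T) :
    |k| ≤ 1 := by
  choose! δ hδ hδT using fun w (hw : w ∈ T - T) => exists_M'_mulVec_sub_mem_sub_self hT hw
  -- follow the differences `w ∈ T - T` along the integer lattice, in coordinates `![p, q]`
  let σ : ℤ × ℤ → ℤ × ℤ := fun z => (-B * z.2 - δ ![(z.1 : ℝ), z.2], z.1 - A * z.2)
  let z : ℕ → ℤ × ℤ := fun n => σ^[n] (k, 0)
  have hzs : ∀ n, z (n + 1) = σ (z n) := fun n => Function.iterate_succ_apply' σ n (k, 0)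
  have hz : ∀ n, ![((z n).1 : ℝ), (z n).2] ∈ T - T := by
    intro n
    induction n with
    | zero => simpa [z, e1] using hk
    | succ n ih =>
      rw [hzs]
      simpa only [M'_mulVec_lattice_sub] using hδT _ ih
  obtain ⟨R, hR⟩ := isBounded_iff_forall_norm_le.1 (hTcp.sub hTcp).isBounded
  have hbdd : BddAbove (range fun n => |(z n).2|) := by
    refine ⟨⌈R⌉, ?_⟩
    rintro _ ⟨n, rfl⟩
    have := (norm_le_pi_norm _ 1).trans (hR _ (hz n))
    simp only [Matrix.cons_val_one, Matrix.cons_val_zero, Real.norm_eq_abs] at this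
    exact Int.cast_le.1 ((Int.cast_abs (R := ℝ) ▸ this).trans (Int.le_ceil R))
  have := abs_le_one_of_bounded_recurrence hA h3 hbdd (fun n => hδ _ (hz n))
    (fun n => by simp only [hzs, σ]; ring) rfl
  simpa [z, σ] using this

end Tile

theorem subPiece_singleton (A B : ℤ) (T : Set (Fin 2 → ℝ)) (a : ℤ) :
    subPiece A B T ![a] = (fun x => (M' A B)⁻¹ *ᵥ ((a : ℝ) • e1 + x)) '' T := by
  simp [subPiece, mulVec_add]

theorem subPiece_singleton_inter_nonempty_iff {A B : ℤ} (hB : B ≠ 0) (T : Set (Fin 2 → ℝ))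
    (a a' : ℤ) : (subPiece A B T ![a] ∩ subPiece A B T ![a']).Nonempty ↔
      ((a' - a : ℤ) : ℝ) • e1 ∈ T - T := by
  have hinj : Function.Injective ((M' A B)⁻¹ *ᵥ ·) :=
    Function.LeftInverse.injective (M'_mulVec_inv_mulVec hB)
  simp only [subPiece_singleton]
  constructor
  · rintro ⟨_, ⟨x, hx, rfl⟩, y, hy, hxy⟩
    refine ⟨x, hx, y, hy, ?_⟩
    have := hinj hxy
    push_cast
    linear_combination (norm := module) -this
  · rintro ⟨x, hx, y, hy, hxy⟩
    refine ⟨_, ⟨x, hx, rfl⟩, y, hy, congrArg _ ?_⟩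
    push_cast at hxy
    linear_combination (norm := module) -hxy

theorem subPiece_one_inter_general
    (A B : ℤ) (hAB : A ≤ B)
    (h3 : 2 * A - B = 3) (hABne : A ≠ B)
    (T : Set (Fin 2 → ℝ)) (hTne : T.Nonempty) (hTcp : IsCompact T)
    (hT : (M' A B).mulVec '' T =
      ⋃ j ∈ Set.Icc (0 : ℤ) (B - 1), (fun x => x + (j : ℝ) • e1) '' T)
    (a₁ a₁' : ℤ) (hd : a₁ ≠ a₁') :
    (subPiece A B T ![a₁] ∩ subPiece A B T ![a₁']).Nonempty ↔
      a₁ - a₁' = 1 ∨ a₁ - a₁' = -1 := by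
  have hA : 4 ≤ A := by omega
  rw [subPiece_singleton_inter_nonempty_iff (by omega)]
  constructor
  · intro h
    have := abs_le.1 (abs_le_one_of_smul_e1_mem_sub_self hA h3 hTcp hT h)
    omega
  · have he1 := e1_mem_sub_self hA h3 hTne hTcp hT
    rintro (h | h)
    · obtain ⟨x, hx, y, hy, hxy⟩ := he1
      refine ⟨y, hy, x, hx, ?_⟩
      rw [show a₁' - a₁ = -1 by omega, ← hxy]
      simp
    · rwa [show a₁' - a₁ = 1 by omega, Int.cast_one, one_smul]

/-- For `0 < A ≤ B`, `B ≥ 2`, `2A - B = 3`, `A ≠ B`, and distinct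
digits `a₁, a₁' ∈ {0,…,B-1}`, the pieces `T_{a₁}` and `T_{a₁'}` intersect iff
`a₁ - a₁' = ±1`. -/
theorem subPiece_one_inter
    (A B : ℤ) (hA : 0 < A) (hAB : A ≤ B) (hB : 2 ≤ B)
    (h3 : 2 * A - B = 3) (hABne : A ≠ B)
    (T : Set (Fin 2 → ℝ)) (hTne : T.Nonempty) (hTcp : IsCompact T)
    (hT : (M' A B).mulVec '' T =
      ⋃ j ∈ Set.Icc (0 : ℤ) (B - 1), (fun x => x + (j : ℝ) • e1) '' T)
    (a₁ a₁' : ℤ) (ha₁ : a₁ ∈ Set.Icc (0 : ℤ) (B - 1))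
    (ha₁' : a₁' ∈ Set.Icc (0 : ℤ) (B - 1)) (hd : a₁ ≠ a₁') :
    (subPiece A B T ![a₁] ∩ subPiece A B T ![a₁']).Nonempty ↔
      a₁ - a₁' = 1 ∨ a₁ - a₁' = -1 :=
  subPiece_one_inter_general A B hAB h3 hABne T hTne hTcp hT a₁ a₁' hd
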